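/- arXiv:2304.12060 — 4 statements merged into one kernel-verified Lean document; each statement's English description precedes it below -/
import Mathlib

section
/- Let n ≥ 2, τ ∈ ℝ and f ∈ C⁰(closure of ℝⁿ₊). Suppose that for every λ > 0, every x ∈ ∂ℝⁿ₊ and every y ∈ ℝⁿ₊ with |y − x| ≥ λ one has (λ/|y−x|)^τ · f( x + λ²(y−x)/|y−x|² ) ≤ f(y). Then f(y', y_n) = f(0', y_n) for all y = (y', y_n) ∈ ℝⁿ₊; that is, f depends only on the last coordinate y_n. -/
/-!
Let `a`, `b` lie at the same positive height and let `0 < c < 1`. The boundary point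
`x = (1 - c²)⁻¹ • (b - a)` and the radius `λ = c ‖a - x‖` are chosen so that the inversion of `a`
in the sphere `∂B(x, λ)` is `b - (1 - c²) • a`, so the hypothesis gives
`c ^ τ * f (b - (1 - c²) • a) ≤ f a`. Letting `c → 1⁻` yields `f b ≤ f a`, and by symmetry
`f a = f b`.
-/

open Filter Topology

variable {E : Type*} [NormedAddCommGroup E] [NormedSpace ℝ E]

def MovingSpheresCondition (ℓ : E →ₗ[ℝ] ℝ) (τ : ℝ) (f : E → ℝ) : Prop :=
  ∀ lam : ℝ, 0 < lam → ∀ x : E, ℓ x = 0 → ∀ y : E, 0 < ℓ y → lam ≤ ‖y - x‖ →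
    (lam / ‖y - x‖) ^ τ * f (x + (lam ^ 2 / ‖y - x‖ ^ 2) • (y - x)) ≤ f y

namespace MovingSpheresCondition

variable {ℓ : E →ₗ[ℝ] ℝ} {τ : ℝ} {f : E → ℝ} {a b : E}

theorem rpow_mul_le (h : MovingSpheresCondition ℓ τ f) (hab : ℓ a = ℓ b) (ha : 0 < ℓ a)
    {c : ℝ} (hc₀ : 0 < c) (hc₁ : c < 1) :
    c ^ τ * f (b - (1 - c ^ 2) • a) ≤ f a := by
  have hr : 1 - c ^ 2 ≠ 0 := by nlinarith
  set x : E := (1 - c ^ 2)⁻¹ • (b - a)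
  have hx : ℓ x = 0 := by simp [x, hab]
  have hax : 0 < ‖a - x‖ := norm_pos_iff.mpr fun h0 ↦ ha.ne' (by simpa [hx] using congrArg ℓ h0)
  have H := h (c * ‖a - x‖) (by positivity) x hx a ha (mul_le_of_le_one_left hax.le hc₁.le)
  have hratio : c * ‖a - x‖ / ‖a - x‖ = c := mul_div_cancel_right₀ c hax.ne'
  have hsq : (c * ‖a - x‖) ^ 2 / ‖a - x‖ ^ 2 = c ^ 2 := by field_simp
  have himage : x + c ^ 2 • (a - x) = b - (1 - c ^ 2) • a := by
    simp only [x]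
    match_scalars <;> field_simp <;> ring
  rwa [hratio, hsq, himage] at H

theorem le_of_apply_eq (h : MovingSpheresCondition ℓ τ f) (hf : ContinuousOn f {x | 0 ≤ ℓ x})
    (hab : ℓ a = ℓ b) (ha : 0 < ℓ a) : f b ≤ f a := by
  have hpath : Continuous fun c : ℝ ↦ b - (1 - c ^ 2) • a := by fun_prop
  have hmaps : ∀ c : ℝ, b - (1 - c ^ 2) • a ∈ {x | 0 ≤ ℓ x} := fun c ↦ by
    simp only [Set.mem_ofPred_eq, map_sub, map_smul, smul_eq_mul, ← hab]
    nlinarith [sq_nonneg c]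
  have hlim : Tendsto (fun c : ℝ ↦ c ^ τ * f (b - (1 - c ^ 2) • a)) (𝓝[<] 1) (𝓝 (f b)) := by
    have hrpow : ContinuousAt (fun c : ℝ ↦ c ^ τ) 1 := continuousAt_id.rpow_const (.inl one_ne_zero)
    have hcont : ContinuousAt (fun c : ℝ ↦ c ^ τ * f (b - (1 - c ^ 2) • a)) 1 :=
      hrpow.mul (hf.comp_continuous hpath hmaps).continuousAt
    simpa using hcont.tendsto.mono_left nhdsWithin_le_nhds
  refine le_of_tendsto hlim ?_
  filter_upwards [Ioo_mem_nhdsLT zero_lt_one] with c hc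
  exact h.rpow_mul_le hab ha hc.1 hc.2

theorem eq_of_apply_eq (h : MovingSpheresCondition ℓ τ f) (hf : ContinuousOn f {x | 0 ≤ ℓ x})
    (hab : ℓ a = ℓ b) (ha : 0 < ℓ a) : f a = f b :=
  le_antisymm (h.le_of_apply_eq hf hab.symm (hab ▸ ha)) (h.le_of_apply_eq hf hab ha)

end MovingSpheresCondition

theorem moving_spheres_halfspace_general
    (n : ℕ) (τ : ℝ)
    (i : Fin n)
    (f : EuclideanSpace ℝ (Fin n) → ℝ)
    (hf : ContinuousOn f {x | 0 ≤ x i})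
    (h : ∀ lam : ℝ, 0 < lam → ∀ x : EuclideanSpace ℝ (Fin n), x i = 0 →
      ∀ y : EuclideanSpace ℝ (Fin n), 0 < y i → lam ≤ ‖y - x‖ →
        (lam / ‖y - x‖) ^ τ * f (x + (lam ^ 2 / ‖y - x‖ ^ 2) • (y - x)) ≤ f y) :
    ∀ y : EuclideanSpace ℝ (Fin n), 0 < y i →
      f y = f (EuclideanSpace.single i (y i)) := by
  intro y hy
  have hms : MovingSpheresCondition (EuclideanSpace.proj i : EuclideanSpace ℝ (Fin n) →L[ℝ] ℝ)
      τ f := h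
  exact hms.eq_of_apply_eq hf (by simp) hy

/-- Moving-spheres lemma in the half space: if
`(λ/|y-x|)^τ f(x + λ²(y-x)/|y-x|²) ≤ f(y)` for all `λ > 0`, all boundary points
`x` and all `y` in the upper half space with `|y-x| ≥ λ`, then `f` depends only
on the last coordinate (indexed by `i`). -/
theorem moving_spheres_halfspace
    (n : ℕ) (hn : 2 ≤ n) (τ : ℝ)
    (i : Fin n) (hi : (i : ℕ) = n - 1)
    (f : EuclideanSpace ℝ (Fin n) → ℝ)
    (hf : ContinuousOn f {x | 0 ≤ x i})
    (h : ∀ lam : ℝ, 0 < lam → ∀ x : EuclideanSpace ℝ (Fin n), x i = 0 →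
      ∀ y : EuclideanSpace ℝ (Fin n), 0 < y i → lam ≤ ‖y - x‖ →
        (lam / ‖y - x‖) ^ τ * f (x + (lam ^ 2 / ‖y - x‖ ^ 2) • (y - x)) ≤ f y) :
    ∀ y : EuclideanSpace ℝ (Fin n), 0 < y i →
      f y = f (EuclideanSpace.single i (y i)) :=
  moving_spheres_halfspace_general n τ i f hf h
end

section
/- Let n ≥ 2 and f ∈ C⁰(closure of ℝⁿ₊). Suppose that for every x ∈ ∂ℝⁿ₊ and every λ > 0 one has f(y) ≥ f( x + λ²(y−x)/|y−x|² ) + ln(λ/|y−x|) for all y ∈ ℝⁿ₊ with |y − x| ≥ λ. Then f(y', y_n) = f(0', y_n) for all y = (y', y_n) ∈ ℝⁿ₊; that is, f depends only on the last coordinate y_n. -/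
/-!
For `y`, `z` in the half space at the same height, let `u` be the unit vector from `z` to `y`
and `c` a boundary point on the bisecting hyperplane of `y` and `z`. The spheres of radius `R`
centred at the boundary points `c - R • u` all pass through `c` and flatten, as `R → ∞`, to the
bisector; hence the inversions of `y` in them tend to `z`, while `log (R / |y - (c - R • u)|) → 0`.
Passing to the limit in the hypothesis gives `f z ≤ f y`, and symmetry gives equality.
-/

open Real Filter Topology EuclideanGeometry
open scoped RealInnerProductSpace

section LargeSpheres

variable {E : Type*} [NormedAddCommGroup E] [InnerProductSpace ℝ E] {c u y : E}

lemma dist_sub_smul_eq_mul_norm {R : ℝ} (hR : 0 < R) :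
    dist y (c - R • u) = R * ‖R⁻¹ • (y - c) + u‖ := by
  calc dist y (c - R • u) = ‖R • (R⁻¹ • (y - c) + u)‖ := by
        rw [dist_eq_norm, smul_add, smul_inv_smul₀ hR.ne']; congr 1; abel
    _ = R * ‖R⁻¹ • (y - c) + u‖ := by rw [norm_smul, Real.norm_of_nonneg hR.le]

lemma tendsto_div_dist_sub_smul_atTop (hu : ‖u‖ = 1) :
    Tendsto (fun R : ℝ => R / dist y (c - R • u)) atTop (𝓝 1) := by
  have hlim : Tendsto (fun R : ℝ => ‖R⁻¹ • (y - c) + u‖⁻¹) atTop (𝓝 1) := by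
    have h := ((tendsto_inv_atTop_zero.smul_const (y - c)).add_const u).norm.inv₀
      (by rw [zero_smul ℝ, zero_add, hu]; exact one_ne_zero)
    simpa [hu] using h
  refine hlim.congr' ?_
  filter_upwards [eventually_gt_atTop 0] with R hR
  rw [dist_sub_smul_eq_mul_norm hR, div_mul_cancel_left₀ hR.ne']

lemma dist_sub_smul_sq (hu : ‖u‖ = 1) (R : ℝ) :
    dist y (c - R • u) ^ 2 = ‖y - c‖ ^ 2 + 2 * R * ⟪y - c, u⟫ + R ^ 2 := by
  rw [dist_eq_norm, sub_sub_eq_add_sub, add_sub_right_comm, norm_add_sq_real,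
    real_inner_smul_right, norm_smul, hu, mul_one, Real.norm_eq_abs, sq_abs]
  ring

lemma le_dist_sub_smul (hu : ‖u‖ = 1) (hyc : 0 ≤ ⟪y - c, u⟫) {R : ℝ} (hR : 0 ≤ R) :
    R ≤ dist y (c - R • u) := by
  refine le_of_sq_le_sq ?_ dist_nonneg
  nlinarith [dist_sub_smul_sq (y := y) (c := c) hu R, sq_nonneg ‖y - c‖, mul_nonneg hR hyc]

/-- Inversions in the spheres of radius `R` tangent at `c` to the hyperplane through `c` normal
to `u` converge, as `R → ∞`, to the reflection in that hyperplane. -/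
lemma tendsto_inversion_sub_smul_atTop (hu : ‖u‖ = 1) :
    Tendsto (fun R : ℝ => inversion (c - R • u) R y) atTop
      (𝓝 (y - (2 * ⟪y - c, u⟫) • u)) := by
  set ρ := fun R : ℝ => R / dist y (c - R • u)
  have hρ : Tendsto ρ atTop (𝓝 1) := tendsto_div_dist_sub_smul_atTop hu
  -- with `ρ = R / dist y (c - R • u)`, the `u`-component `R * (ρ ^ 2 - 1)` of the inversion
  -- equals `-(R⁻¹ * ‖y - c‖ ^ 2 + 2 * ⟪y - c, u⟫) * ρ ^ 2` by `dist_sub_smul_sq`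
  have hlim : Tendsto (fun R : ℝ => c + ρ R ^ 2 • (y - c) -
      ((R⁻¹ * ‖y - c‖ ^ 2 + 2 * ⟪y - c, u⟫) * ρ R ^ 2) • u) atTop
      (𝓝 (y - (2 * ⟪y - c, u⟫) • u)) := by
    have h := ((tendsto_const_nhds (x := c)).add ((hρ.pow 2).smul_const (y - c))).sub
      ((((tendsto_inv_atTop_zero.mul_const (‖y - c‖ ^ 2)).add_const (2 * ⟪y - c, u⟫)).mul
        (hρ.pow 2)).smul_const u)
    convert h using 2
    simp
  refine hlim.congr' ?_
  filter_upwards [eventually_gt_atTop 0, hρ.eventually (lt_mem_nhds one_pos)] with R hR hρR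
  have hd : dist y (c - R • u) ≠ 0 := fun h0 => by simp only [ρ, h0, div_zero, lt_irrefl] at hρR
  have hscal : ρ R ^ 2 * R - R = -((R⁻¹ * ‖y - c‖ ^ 2 + 2 * ⟪y - c, u⟫) * ρ R ^ 2) := by
    simp only [ρ]
    field_simp
    linear_combination -dist_sub_smul_sq (y := y) (c := c) hu R
  simp only [inversion, vsub_eq_sub, vadd_eq_add]
  change _ = ρ R ^ 2 • _ + _
  linear_combination (norm := module) -(hscal • u)

end LargeSpheres

section HalfSpace

variable {n : ℕ} {i : Fin n}

lemma inversion_apply_of_apply_eq_zero {x : EuclideanSpace ℝ (Fin n)} (hx : x i = 0) (lam : ℝ)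
    (y : EuclideanSpace ℝ (Fin n)) : inversion x lam y i = (lam / dist y x) ^ 2 * y i := by
  simp [inversion, hx]

lemma apply_le_apply_of_apply_eq {f : EuclideanSpace ℝ (Fin n) → ℝ}
    (hf : ContinuousOn f {x | 0 ≤ x i})
    (h : ∀ x : EuclideanSpace ℝ (Fin n), x i = 0 → ∀ lam : ℝ, 0 < lam →
      ∀ y : EuclideanSpace ℝ (Fin n), 0 < y i → lam ≤ dist y x →
        f (inversion x lam y) + log (lam / dist y x) ≤ f y)
    {y z : EuclideanSpace ℝ (Fin n)} (hy : 0 < y i) (hz : z i = y i) : f z ≤ f y := by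
  rcases eq_or_ne z y with rfl | hzy
  · rfl
  set u : EuclideanSpace ℝ (Fin n) := ‖y - z‖⁻¹ • (y - z)
  set c : EuclideanSpace ℝ (Fin n) := midpoint ℝ y z - EuclideanSpace.single i (y i)
  have hu : ‖u‖ = 1 := norm_smul_inv_norm (sub_ne_zero.2 hzy.symm)
  have hui : u i = 0 := by simp [u, hz]
  have hci : c i = 0 := by simp [c, midpoint_eq_smul_add, hz]; ring
  have hyc : ⟪y - c, u⟫ = ‖y - z‖ / 2 := by
    have : y - c = (2⁻¹ : ℝ) • (y - z) + EuclideanSpace.single i (y i) := by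
      simp only [c, midpoint_eq_smul_add, invOf_eq_inv]; module
    rw [this, inner_add_left, EuclideanSpace.inner_single_left, hui, mul_zero, add_zero,
      real_inner_smul_left, real_inner_smul_right, real_inner_self_eq_norm_sq]
    field_simp
  have hreflect : y - (2 * ⟪y - c, u⟫) • u = z := by
    rw [hyc, smul_smul, mul_div_cancel₀ _ two_ne_zero,
      mul_inv_cancel₀ (norm_ne_zero_iff.2 (sub_ne_zero.2 hzy.symm)), one_smul, sub_sub_cancel]
  have hcenter (R : ℝ) : (c - R • u) i = 0 := by simp [hci, hui]
  have hdist {R : ℝ} (hR : 0 < R) : R ≤ dist y (c - R • u) :=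
    le_dist_sub_smul hu (by rw [hyc]; positivity) hR.le
  have hmem : ∀ᶠ R in atTop, inversion (c - R • u) R y ∈ {x | 0 ≤ x i} := by
    filter_upwards [eventually_gt_atTop 0] with R hR
    rw [inversion_apply_of_apply_eq_zero (hcenter R)]
    positivity
  have hlim : Tendsto (fun R : ℝ => f (inversion (c - R • u) R y) + log (R / dist y (c - R • u)))
      atTop (𝓝 (f z + log 1)) := by
    refine ((hf z (by simp [hz, hy.le])).tendsto.comp ?_).add
      ((continuousAt_log one_ne_zero).tendsto.comp (tendsto_div_dist_sub_smul_atTop hu))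
    rw [← hreflect]
    exact tendsto_nhdsWithin_iff.2 ⟨tendsto_inversion_sub_smul_atTop hu, hmem⟩
  rw [log_one, add_zero] at hlim
  refine le_of_tendsto hlim ?_
  filter_upwards [eventually_gt_atTop 0] with R hR
  exact h _ (hcenter R) R hR y hy (hdist hR)

end HalfSpace

theorem moving_spheres_halfspace_log_general
    (n : ℕ)
    (i : Fin n)
    (f : EuclideanSpace ℝ (Fin n) → ℝ)
    (hf : ContinuousOn f {x | 0 ≤ x i})
    (h : ∀ x : EuclideanSpace ℝ (Fin n), x i = 0 → ∀ lam : ℝ, 0 < lam →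
      ∀ y : EuclideanSpace ℝ (Fin n), 0 < y i → lam ≤ ‖y - x‖ →
        f (x + (lam ^ 2 / ‖y - x‖ ^ 2) • (y - x)) + Real.log (lam / ‖y - x‖) ≤ f y) :
    ∀ y : EuclideanSpace ℝ (Fin n), 0 < y i →
      f y = f (EuclideanSpace.single i (y i)) := by
  have h' : ∀ x : EuclideanSpace ℝ (Fin n), x i = 0 → ∀ lam : ℝ, 0 < lam →
      ∀ y : EuclideanSpace ℝ (Fin n), 0 < y i → lam ≤ dist y x →
        f (inversion x lam y) + log (lam / dist y x) ≤ f y := by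
    intro x hx lam hlam y hy hle
    rw [dist_eq_norm] at hle ⊢
    simpa only [inversion, vsub_eq_sub, vadd_eq_add, dist_eq_norm, div_pow, add_comm x]
      using h x hx lam hlam y hy hle
  intro y hy
  have hsingle : EuclideanSpace.single i (y i) i = y i := by simp
  exact le_antisymm (apply_le_apply_of_apply_eq hf h' (by rwa [hsingle]) hsingle.symm)
    (apply_le_apply_of_apply_eq hf h' hy hsingle)

/-- Moving-spheres lemma with logarithmic term in the half space: if
`f(y) ≥ f(x + λ²(y-x)/|y-x|²) + ln(λ/|y-x|)` for all boundary points `x`, all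
`λ > 0` and all `y` in the upper half space with `|y-x| ≥ λ`, then `f` depends
only on the last coordinate (indexed by `i`). -/
theorem moving_spheres_halfspace_log
    (n : ℕ) (hn : 2 ≤ n)
    (i : Fin n) (hi : (i : ℕ) = n - 1)
    (f : EuclideanSpace ℝ (Fin n) → ℝ)
    (hf : ContinuousOn f {x | 0 ≤ x i})
    (h : ∀ x : EuclideanSpace ℝ (Fin n), x i = 0 → ∀ lam : ℝ, 0 < lam →
      ∀ y : EuclideanSpace ℝ (Fin n), 0 < y i → lam ≤ ‖y - x‖ →
        f (x + (lam ^ 2 / ‖y - x‖ ^ 2) • (y - x)) + Real.log (lam / ‖y - x‖) ≤ f y) :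
    ∀ y : EuclideanSpace ℝ (Fin n), 0 < y i →
      f y = f (EuclideanSpace.single i (y i)) :=
  moving_spheres_halfspace_log_general n i f hf h
end

section
/- Let α ≤ −2. Then there exists no convex function u ∈ C²(ℝ²₊) ∩ C(closure of ℝ²₊) satisfying det D²u = y^α in the open upper half plane ℝ²₊ with boundary value u(x,0) = x²/2 for all x ∈ ℝ. -/
open Real

/-- Partial derivative in the `x`-direction. -/
noncomputable def pdx (u : ℝ × ℝ → ℝ) (p : ℝ × ℝ) : ℝ := fderiv ℝ u p (1, 0)

/-- Partial derivative in the `y`-direction. -/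
noncomputable def pdy (u : ℝ × ℝ → ℝ) (p : ℝ × ℝ) : ℝ := fderiv ℝ u p (0, 1)

/-- Determinant of the Hessian: `u_xx u_yy - u_xy ^ 2`. -/
noncomputable def detD2 (u : ℝ × ℝ → ℝ) (p : ℝ × ℝ) : ℝ :=
  pdx (pdx u) p * pdy (pdy u) p - (pdy (pdx u) p) ^ 2

/-!
Convexity makes `u_xx ≥ 0`, and `det D²u = y^α ≥ y⁻²` for `0 < y ≤ 1` then forces
`u_yy ≥ 1 / (y² u_xx)`. Since `u` is bounded on a compact neighbourhood of the boundary segment,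
convexity bounds `∫₋₁¹ u_xx(x, y) dx = u_x(1, y) - u_x(-1, y)` by a constant `D`, so by
Cauchy–Schwarz `∫₋₁¹ u_yy(x, y) dx ≥ 4 / (D y²)`. Integrating in `y` (Fubini), the mean
`F(y) = ∫₋₁¹ u_y(x, y) dx` satisfies `y F(y) ≤ -4 / D + O(y)`. On the other hand convexity gives
`y u_y(x, y) ≥ u(x, y) - u(x, 0)`, which tends to `0` uniformly as `y → 0` by continuity up to the
boundary, so `liminf y F(y) ≥ 0`.
-/

open Set Filter Topology MeasureTheory intervalIntegral
open scoped Interval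

local notation "ℝ²₊" => Set.ofPred fun p : ℝ × ℝ => 0 < Prod.snd p

section Partials

variable {w : ℝ × ℝ → ℝ} {S : Set (ℝ × ℝ)} {x y : ℝ}

theorem DifferentiableAt.hasDerivAt_pdx (h : DifferentiableAt ℝ w (x, y)) :
    HasDerivAt (fun s => w (s, y)) (pdx w (x, y)) x := by
  simpa [pdx, pdy, Function.comp_def] using
    h.hasFDerivAt.comp_hasDerivAt x ((hasDerivAt_id x).prodMk (hasDerivAt_const x y))

theorem DifferentiableAt.hasDerivAt_pdy (h : DifferentiableAt ℝ w (x, y)) :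
    HasDerivAt (fun t => w (x, t)) (pdy w (x, y)) y := by
  simpa [pdx, pdy, Function.comp_def] using
    h.hasFDerivAt.comp_hasDerivAt y ((hasDerivAt_const y x).prodMk (hasDerivAt_id y))

theorem ContDiffOn.pdx_of_isOpen {n m : WithTop ℕ∞} (hw : ContDiffOn ℝ n w S) (hS : IsOpen S)
    (hmn : m + 1 ≤ n) : ContDiffOn ℝ m (pdx w) S :=
  (hw.fderiv_of_isOpen hS hmn).clm_apply contDiffOn_const

theorem ContDiffOn.pdy_of_isOpen {n m : WithTop ℕ∞} (hw : ContDiffOn ℝ n w S) (hS : IsOpen S)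
    (hmn : m + 1 ≤ n) : ContDiffOn ℝ m (pdy w) S :=
  (hw.fderiv_of_isOpen hS hmn).clm_apply contDiffOn_const

end Partials

section Convex

variable {𝕜 E F β : Type*} [Field 𝕜] [LinearOrder 𝕜] [AddCommGroup E] [AddCommGroup F]
  [AddCommMonoid β] [PartialOrder β] [Module 𝕜 E] [Module 𝕜 F] [SMul 𝕜 β]

theorem ConvexOn.comp_prodMk_right {f : E × F → β} {s : Set (E × F)} (hf : ConvexOn 𝕜 s f)
    (y : F) : ConvexOn 𝕜 {x | (x, y) ∈ s} fun x => f (x, y) :=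
  (hf.comp_affineMap
    (⟨fun x => (x, y), LinearMap.inl 𝕜 E F, fun _ _ => by simp⟩ : E →ᵃ[𝕜] E × F) :)

theorem ConvexOn.comp_prodMk_left {f : E × F → β} {s : Set (E × F)} (hf : ConvexOn 𝕜 s f)
    (x : E) : ConvexOn 𝕜 {y | (x, y) ∈ s} fun y => f (x, y) :=
  (hf.comp_affineMap
    (⟨fun y => (x, y), LinearMap.inr 𝕜 E F, fun _ _ => by simp⟩ : F →ᵃ[𝕜] E × F) :)

end Convex

section ConvexSlopes

variable {u : ℝ × ℝ → ℝ} {S : Set (ℝ × ℝ)} {x y : ℝ}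

theorem ConvexOn.pdx_le_sub (hu : ConvexOn ℝ S u) (hx : (x, y) ∈ S) (hx' : (x + 1, y) ∈ S)
    (hd : DifferentiableAt ℝ u (x, y)) : pdx u (x, y) ≤ u (x + 1, y) - u (x, y) := by
  simpa [slope_def_field] using
    (hu.comp_prodMk_right y).le_slope_of_hasDerivAt hx hx' (lt_add_one x) hd.hasDerivAt_pdx

theorem ConvexOn.sub_le_pdx (hu : ConvexOn ℝ S u) (hx' : (x - 1, y) ∈ S) (hx : (x, y) ∈ S)
    (hd : DifferentiableAt ℝ u (x, y)) : u (x, y) - u (x - 1, y) ≤ pdx u (x, y) := by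
  simpa [slope_def_field] using
    (hu.comp_prodMk_right y).slope_le_of_hasDerivAt hx' hx (sub_one_lt x) hd.hasDerivAt_pdx

theorem ConvexOn.sub_le_mul_pdy {t : ℝ} (hu : ConvexOn ℝ S u) (ht : (x, t) ∈ S) (hy : (x, y) ∈ S)
    (hty : t < y) (hd : DifferentiableAt ℝ u (x, y)) :
    u (x, y) - u (x, t) ≤ (y - t) * pdy u (x, y) := by
  have := (hu.comp_prodMk_left x).slope_le_of_hasDerivAt ht hy hty hd.hasDerivAt_pdy
  rw [slope_def_field, div_le_iff₀ (sub_pos.2 hty)] at this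
  linarith

theorem ConvexOn.pdx_pdx_nonneg (hu : ConvexOn ℝ S u)
    (hline : ∀ s, (s, y) ∈ S ∧ DifferentiableAt ℝ u (s, y))
    (hd : DifferentiableAt ℝ (pdx u) (x, y)) : 0 ≤ pdx (pdx u) (x, y) := by
  have hmono : MonotoneOn (deriv fun s => u (s, y)) {s | (s, y) ∈ S} :=
    (hu.comp_prodMk_right y).monotoneOn_deriv fun s _ =>
      (hline s).2.hasDerivAt_pdx.differentiableAt
  refine hd.hasDerivAt_pdx.nonneg_of_monotone fun a b hab => ?_
  simpa only [(hline _).2.hasDerivAt_pdx.deriv] using hmono (hline a).1 (hline b).1 hab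

end ConvexSlopes

-- The tangent line of `a ↦ a⁻¹` at `K`; the case `K = 0` holds because `x / 0 = 0`.
theorem mul_two_div_sub_div_sq_le {a b c K : ℝ} (ha : 0 ≤ a) (hc : 0 < c) (h : c ≤ a * b) :
    c * (2 / K - a / K ^ 2) ≤ b := by
  have ha : 0 < a := ha.lt_of_ne (by rintro rfl; linarith [zero_mul b])
  have hsq : a⁻¹ - (2 / K - a / K ^ 2) = a⁻¹ * (1 - a / K) ^ 2 := by
    rcases eq_or_ne K 0 with rfl | hK
    · simp
    · field_simp; ring
  have hinv : 2 / K - a / K ^ 2 ≤ a⁻¹ := by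
    rw [← sub_nonneg, hsq]; positivity
  calc c * (2 / K - a / K ^ 2) ≤ c * a⁻¹ := by gcongr
    _ ≤ b := by rw [← div_eq_mul_inv, div_le_iff₀' ha]; exact h

-- A Cauchy–Schwarz bound `(∫ √(a b))² ≤ ∫ a ∫ b`, obtained by integrating the tangent-line
-- bound for `b ≥ c / a` at the optimal `K = D / (q - p)`.
theorem mul_sq_div_le_integral_of_le_mul {a b : ℝ → ℝ} {c D p q : ℝ} (hpq : p ≤ q) (hc : 0 < c)
    (hD : 0 < D) (ha : ∀ x ∈ Icc p q, 0 ≤ a x) (hab : ∀ x ∈ Icc p q, c ≤ a x * b x)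
    (ha_int : IntervalIntegrable a volume p q) (hb_int : IntervalIntegrable b volume p q)
    (haD : ∫ x in p..q, a x ≤ D) : c * (q - p) ^ 2 / D ≤ ∫ x in p..q, b x := by
  rcases hpq.eq_or_lt with rfl | hpq'
  · simp
  have hL : (q - p) ≠ 0 := (sub_pos.2 hpq').ne'
  have hK :
      c * (2 * (q - p) / (D / (q - p)) - D / (D / (q - p)) ^ 2) = c * (q - p) ^ 2 / D := by
    field_simp
    ring
  set K := D / (q - p)
  have hpoint : ∀ x ∈ Icc p q, c * (2 / K - a x / K ^ 2) ≤ b x := fun x hx =>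
    mul_two_div_sub_div_sq_le (ha x hx) hc (hab x hx)
  calc c * (q - p) ^ 2 / D ≤ c * (2 * (q - p) / K - (∫ x in p..q, a x) / K ^ 2) := by
        rw [← hK]; gcongr
    _ = ∫ x in p..q, c * (2 / K - a x / K ^ 2) := by
        rw [intervalIntegral.integral_const_mul, integral_sub intervalIntegrable_const
          (ha_int.div_const _), intervalIntegral.integral_const, intervalIntegral.integral_div,
          smul_eq_mul]
        ring
    _ ≤ ∫ x in p..q, b x :=
        integral_mono_on hpq ((intervalIntegrable_const.sub (ha_int.div_const _)).const_mul _)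
          hb_int hpoint

theorem ContinuousOn.intervalIntegrable_intervalIntegral {f : ℝ × ℝ → ℝ} {a b c d : ℝ}
    (hf : ContinuousOn f ([[a, b]] ×ˢ [[c, d]])) :
    IntervalIntegrable (fun t => ∫ x in a..b, f (x, t)) volume c d := by
  have hint : IntegrableOn (f ∘ Prod.swap) (Ι c d ×ˢ Ι a b) :=
    ((hf.comp continuous_swap.continuousOn fun q hq => ⟨hq.2, hq.1⟩).integrableOn_compact
      (isCompact_uIcc.prod isCompact_uIcc)).mono_set
      (prod_mono uIoc_subset_uIcc uIoc_subset_uIcc)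
  rw [IntegrableOn, Measure.volume_eq_prod, ← Measure.prod_restrict] at hint
  simp_rw [intervalIntegral.intervalIntegral_eq_integral_uIoc]
  exact (intervalIntegrable_iff.2 hint.integral_prod_left :
    IntervalIntegrable _ volume c d).const_mul (if a ≤ b then (1 : ℝ) else -1)

theorem integral_sub_eq_integral_integral_pdy {g : ℝ × ℝ → ℝ} {a b c d : ℝ}
    (hg : ∀ p ∈ [[a, b]] ×ˢ [[c, d]], DifferentiableAt ℝ g p)
    (hg' : ContinuousOn (pdy g) ([[a, b]] ×ˢ [[c, d]])) :
    ∫ x in a..b, (g (x, d) - g (x, c)) = ∫ t in c..d, ∫ x in a..b, pdy g (x, t) := by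
  rw [← intervalIntegral_intervalIntegral_swap]
  · refine integral_congr fun x hx => (integral_eq_sub_of_hasDerivAt
      (fun t ht => (hg _ ⟨hx, ht⟩).hasDerivAt_pdy) ?_).symm
    exact (hg'.comp (Continuous.prodMk_right x).continuousOn fun t ht => ⟨hx, ht⟩)
      |>.intervalIntegrable
  · exact (hg'.integrableOn_compact (isCompact_uIcc.prod isCompact_uIcc)).mono_set
      (prod_mono uIoc_subset_uIcc uIoc_subset_uIcc)

theorem ContinuousOn.tendstoUniformlyOn_nhdsGE_zero {u : ℝ × ℝ → ℝ}
    (hu : ContinuousOn u {p | 0 ≤ p.2}) {s : Set ℝ} (hs : IsCompact s) :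
    TendstoUniformlyOn (fun y x => u (x, y)) (fun x => u (x, 0)) (𝓝[≥] 0) s := by
  have hunif : UniformContinuousOn (Function.uncurry fun y x => u (x, y)) (Icc 0 1 ×ˢ s) :=
    (isCompact_Icc.prod hs).uniformContinuousOn_of_continuous
      (hu.comp continuous_swap.continuousOn fun q hq => hq.1.1)
  exact fun v hv => (hunif.tendstoUniformlyOn (F := fun y x => u (x, y))
    (left_mem_Icc.2 zero_le_one) v hv).filter_mono (nhdsWithin_le_of_mem (Icc_mem_nhdsGE one_pos))

theorem eventually_mul_lt_of_le_sub {F : ℝ → ℝ} {κ : ℝ} (hκ : 0 < κ)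
    (h : ∀ y ∈ Ioc 0 1, κ * (y⁻¹ - 1) ≤ F 1 - F y) : ∀ᶠ y in 𝓝[>] 0, y * F y < -(κ / 2) := by
  have hlim : Tendsto (fun y => y * (F 1 + κ) - κ) (𝓝[>] 0) (𝓝 (-κ)) := by
    refine tendsto_nhdsWithin_of_tendsto_nhds ?_
    exact ((continuous_mul_const _).sub continuous_const).tendsto' 0 _ (by simp)
  filter_upwards [hlim.eventually_lt_const (show -κ < -(κ / 2) by linarith),
    Ioc_mem_nhdsGT one_pos] with y hlt hy
  have := mul_le_mul_of_nonneg_left (h y hy) hy.1.le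
  rw [mul_left_comm, mul_sub, mul_inv_cancel₀ hy.1.ne'] at this
  linarith

theorem isOpen_halfPlane : IsOpen ℝ²₊ := isOpen_lt continuous_const continuous_snd

section HalfPlane

variable {u : ℝ × ℝ → ℝ}

theorem ContDiffOn.differentiableAt_of_mem_halfPlane (hu : ContDiffOn ℝ 2 u ℝ²₊) {p : ℝ × ℝ}
    (hp : p ∈ ℝ²₊) : DifferentiableAt ℝ u p :=
  (hu.differentiableOn two_ne_zero).differentiableAt (isOpen_halfPlane.mem_nhds hp)

theorem ContDiffOn.differentiableAt_pdx (hu : ContDiffOn ℝ 2 u ℝ²₊) {p : ℝ × ℝ} (hp : p ∈ ℝ²₊) :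
    DifferentiableAt ℝ (pdx u) p :=
  ((hu.pdx_of_isOpen isOpen_halfPlane (m := 1) (by norm_num)).differentiableOn
    one_ne_zero).differentiableAt (isOpen_halfPlane.mem_nhds hp)

theorem ContDiffOn.differentiableAt_pdy (hu : ContDiffOn ℝ 2 u ℝ²₊) {p : ℝ × ℝ} (hp : p ∈ ℝ²₊) :
    DifferentiableAt ℝ (pdy u) p :=
  ((hu.pdy_of_isOpen isOpen_halfPlane (m := 1) (by norm_num)).differentiableOn
    one_ne_zero).differentiableAt (isOpen_halfPlane.mem_nhds hp)

theorem ContDiffOn.continuousOn_pdy (hu : ContDiffOn ℝ 2 u ℝ²₊) : ContinuousOn (pdy u) ℝ²₊ :=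
  (hu.pdy_of_isOpen isOpen_halfPlane (m := 1) (by norm_num)).continuousOn

theorem ContDiffOn.continuousOn_pdx_pdx (hu : ContDiffOn ℝ 2 u ℝ²₊) :
    ContinuousOn (pdx (pdx u)) ℝ²₊ :=
  ((hu.pdx_of_isOpen isOpen_halfPlane (m := 1) (by norm_num)).pdx_of_isOpen isOpen_halfPlane
    (m := 0) le_rfl).continuousOn

theorem ContDiffOn.continuousOn_pdy_pdy (hu : ContDiffOn ℝ 2 u ℝ²₊) :
    ContinuousOn (pdy (pdy u)) ℝ²₊ :=
  ((hu.pdy_of_isOpen isOpen_halfPlane (m := 1) (by norm_num)).pdy_of_isOpen isOpen_halfPlane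
    (m := 0) le_rfl).continuousOn

theorem ContinuousOn.continuous_comp_prodMk_right {g : ℝ × ℝ → ℝ} (hg : ContinuousOn g ℝ²₊)
    {y : ℝ} (hy : 0 < y) : Continuous fun x => g (x, y) :=
  hg.comp_continuous (by fun_prop) fun _ => hy

theorem inv_sq_le_pdx_pdx_mul_pdy_pdy {α x y : ℝ} (hα : α ≤ -2) (hy : 0 < y) (hy1 : y ≤ 1)
    (hdet : detD2 u (x, y) = y ^ α) : (y ^ 2)⁻¹ ≤ pdx (pdx u) (x, y) * pdy (pdy u) (x, y) := by
  have : (y ^ 2)⁻¹ ≤ y ^ α := by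
    rw [← Real.rpow_natCast, ← Real.rpow_neg hy.le]
    exact Real.rpow_le_rpow_of_exponent_ge hy hy1 (by push_cast; linarith)
  rw [detD2] at hdet
  nlinarith [sq_nonneg (pdy (pdx u) (x, y))]

theorem exists_pos_pdx_sub_pdx_le (hd : ∀ p ∈ ℝ²₊, DifferentiableAt ℝ u p)
    (hcont : ContinuousOn u {p | 0 ≤ p.2}) (hconv : ConvexOn ℝ {p | 0 ≤ p.2} u) :
    ∃ D > 0, ∀ y ∈ Ioc (0 : ℝ) 1, pdx u (1, y) - pdx u (-1, y) ≤ D := by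
  obtain ⟨M, hM⟩ := (isCompact_Icc.prod isCompact_Icc).exists_bound_of_continuousOn
    (hcont.mono fun p (hp : p ∈ Icc (-2 : ℝ) 2 ×ˢ Icc (0 : ℝ) 1) => hp.2.1)
  have hbound : ∀ x ∈ Icc (-2 : ℝ) 2, ∀ y ∈ Icc (0 : ℝ) 1, |u (x, y)| ≤ M := fun x hx y hy =>
    hM (x, y) ⟨hx, hy⟩
  refine ⟨4 * M + 1, by linarith [(abs_nonneg _).trans (hbound 0 (by norm_num) 0 (by norm_num))],
    fun y hy => ?_⟩
  have hy' : y ∈ Icc (0 : ℝ) 1 := Ioc_subset_Icc_self hy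
  have hright := hconv.pdx_le_sub (x := 1) hy.1.le hy.1.le (hd _ hy.1)
  have hleft := hconv.sub_le_pdx (x := -1) hy.1.le hy.1.le (hd _ hy.1)
  norm_num at hright hleft
  have h := fun x hx => abs_le.1 (hbound x hx y hy')
  linarith [h 2 (by norm_num), h 1 (by norm_num), h (-1) (by norm_num), h (-2) (by norm_num)]

variable {α D : ℝ}

theorem le_integral_pdy_pdy (hu : ContDiffOn ℝ 2 u ℝ²₊) (hconv : ConvexOn ℝ {p | 0 ≤ p.2} u)
    (hα : α ≤ -2) (hpde : ∀ p : ℝ × ℝ, 0 < p.2 → detD2 u p = p.2 ^ α) (hD : 0 < D)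
    (hDbound : ∀ y ∈ Ioc (0 : ℝ) 1, pdx u (1, y) - pdx u (-1, y) ≤ D) {y : ℝ} (hy : y ∈ Ioc 0 1) :
    4 / D * (y ^ 2)⁻¹ ≤ ∫ x in (-1)..1, pdy (pdy u) (x, y) := by
  have hdx := fun x => hu.differentiableAt_pdx (p := (x, y)) hy.1
  have hxx := (hu.continuousOn_pdx_pdx.continuous_comp_prodMk_right hy.1).intervalIntegrable
    (μ := volume)
  have hyy := (hu.continuousOn_pdy_pdy.continuous_comp_prodMk_right hy.1).intervalIntegrable
    (μ := volume)
  convert mul_sq_div_le_integral_of_le_mul (by norm_num) (inv_pos.2 (pow_pos hy.1 2)) hD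
    (fun x _ => hconv.pdx_pdx_nonneg
      (fun s => ⟨hy.1.le, hu.differentiableAt_of_mem_halfPlane hy.1⟩) (hdx x))
    (fun x _ => inv_sq_le_pdx_pdx_mul_pdy_pdy hα hy.1 hy.2 (hpde (x, y) hy.1))
    (hxx (-1) 1) (hyy (-1) 1) ?_ using 1
  · ring
  · rw [integral_eq_sub_of_hasDerivAt (fun x _ => (hdx x).hasDerivAt_pdx) (hxx (-1) 1)]
    exact hDbound y hy

theorem le_integral_pdy_sub_integral_pdy (hu : ContDiffOn ℝ 2 u ℝ²₊)
    (hconv : ConvexOn ℝ {p | 0 ≤ p.2} u) (hα : α ≤ -2)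
    (hpde : ∀ p : ℝ × ℝ, 0 < p.2 → detD2 u p = p.2 ^ α) (hD : 0 < D)
    (hDbound : ∀ y ∈ Ioc (0 : ℝ) 1, pdx u (1, y) - pdx u (-1, y) ≤ D) {y : ℝ} (hy : y ∈ Ioc 0 1) :
    4 / D * (y⁻¹ - 1) ≤ (∫ x in (-1)..1, pdy u (x, 1)) - ∫ x in (-1)..1, pdy u (x, y) := by
  have hR : [[-1, 1]] ×ˢ [[y, 1]] ⊆ ℝ²₊ := fun p ⟨_, hp⟩ =>
    hy.1.trans_le (by rw [uIcc_of_le hy.2] at hp; exact hp.1)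
  have hpy := fun {t : ℝ} (ht : 0 < t) =>
    (hu.continuousOn_pdy.continuous_comp_prodMk_right ht).intervalIntegrable (μ := volume) (-1) 1
  have hinv : 0 ∉ [[y, 1]] := by simp [uIcc_of_le hy.2, hy.1]
  rw [← integral_sub (hpy one_pos) (hpy hy.1),
    integral_sub_eq_integral_integral_pdy (fun p hp => hu.differentiableAt_pdy (hR hp))
      (hu.continuousOn_pdy_pdy.mono hR)]
  calc 4 / D * (y⁻¹ - 1) = ∫ t in y..1, 4 / D * t ^ (-2 : ℤ) := by
        rw [intervalIntegral.integral_const_mul, integral_zpow (Or.inr ⟨by norm_num, hinv⟩)]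
        congr 1
        norm_num
        ring
    _ ≤ ∫ t in y..1, ∫ x in (-1)..1, pdy (pdy u) (x, t) :=
        integral_mono_on hy.2 ((intervalIntegrable_zpow (Or.inr hinv)).const_mul _)
          (hu.continuousOn_pdy_pdy.mono hR).intervalIntegrable_intervalIntegral fun t ht => by
            simpa using
              le_integral_pdy_pdy hu hconv hα hpde hD hDbound ⟨hy.1.trans_le ht.1, ht.2⟩

theorem eventually_neg_two_mul_le_mul_integral_pdy (hu : ContDiffOn ℝ 2 u ℝ²₊)
    (hcont : ContinuousOn u {p | 0 ≤ p.2}) (hconv : ConvexOn ℝ {p | 0 ≤ p.2} u) {ε : ℝ}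
    (hε : 0 < ε) : ∀ᶠ y in 𝓝[>] 0, -(2 * ε) ≤ y * ∫ x in (-1)..1, pdy u (x, y) := by
  have hclose := Metric.tendstoUniformlyOn_iff.1
    (hcont.tendstoUniformlyOn_nhdsGE_zero (isCompact_Icc (a := -1) (b := 1))) ε hε
  filter_upwards [nhdsWithin_mono _ Ioi_subset_Ici_self hclose, self_mem_nhdsWithin]
    with y hclose (hy : 0 < y)
  have hpy := (hu.continuousOn_pdy.continuous_comp_prodMk_right hy).const_mul y
  calc -(2 * ε) = ∫ x in (-1)..1, -ε := by norm_num
    _ ≤ ∫ x in (-1)..1, y * pdy u (x, y) := by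
        refine integral_mono_on (by norm_num) intervalIntegrable_const
          (hpy.intervalIntegrable _ _) fun x hx => ?_
        have hdist := hclose x hx
        rw [Real.dist_eq, abs_lt] at hdist
        have := hconv.sub_le_mul_pdy (x := x) (le_refl (0 : ℝ)) hy.le hy
          (hu.differentiableAt_of_mem_halfPlane hy)
        rw [sub_zero] at this
        linarith
    _ = y * ∫ x in (-1)..1, pdy u (x, y) := intervalIntegral.integral_const_mul _ _

end HalfPlane

/-- For `α ≤ -2` there is no convex solution of `det D²u = y^α` in the upper half
plane, continuous up to the boundary, with boundary value `u(x,0) = x²/2`. -/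
theorem no_solution_alpha_le_neg_two (α : ℝ) (hα : α ≤ -2) :
    ¬ ∃ u : ℝ × ℝ → ℝ,
        ContDiffOn ℝ 2 u {p : ℝ × ℝ | 0 < p.2} ∧
        ContinuousOn u {p : ℝ × ℝ | 0 ≤ p.2} ∧
        ConvexOn ℝ {p : ℝ × ℝ | 0 ≤ p.2} u ∧
        (∀ p : ℝ × ℝ, 0 < p.2 → detD2 u p = p.2 ^ α) ∧
        (∀ x : ℝ, u (x, 0) = x ^ 2 / 2) := by
  rintro ⟨u, hu, hcont, hconv, hpde, -⟩
  obtain ⟨D, hD, hDbound⟩ := exists_pos_pdx_sub_pdx_le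
    (fun _ => hu.differentiableAt_of_mem_halfPlane) hcont hconv
  obtain ⟨y, hupper, hlower⟩ := ((eventually_mul_lt_of_le_sub
    (F := fun t => ∫ x in (-1)..1, pdy u (x, t)) (by positivity) fun y hy =>
      le_integral_pdy_sub_integral_pdy hu hconv hα hpde hD hDbound hy).and
    (eventually_neg_two_mul_le_mul_integral_pdy hu hcont hconv (inv_pos.2 hD))).exists
  linarith [show 4 / D / 2 = 2 * D⁻¹ by ring]
end

section
/- Let a ≥ 0, b > 0 and α ∈ ℝ. Let Ω ⊂ ℝ² be an open subset of the upper half plane {y > 0} and let u ∈ C²(Ω) be a uniformly convex solution of det D²u = (a + b y)^α in Ω. Then its partial Legendre transform u*(ξ,η) = x u_x(x,y) − u(x,y), with (ξ,η) = (u_x(x,y), y), satisfies the Grushin-type equation (a + b η)^α u*_{ξξ} + u*_{ηη} = 0 on P(Ω), where P(x,y) = (u_x(x,y), y). -/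
/-!
Near `P(p)` the map `P(x, y) = (u_x, y)` has a `C¹` local inverse `g`, because its derivative
`(v₁, v₂) ↦ (u_xx v₁ + u_xy v₂, v₂)` is invertible when `u_xx ≠ 0`. Writing `u*` through `g`
as `u*(ξ, η) = x(ξ, η) ξ - u(g(ξ, η))` and using `u_x ∘ g = ξ`, the chain rule gives
`∇u* = (x, -u_y ∘ g)`. Differentiating once more with `Dg = (DP)⁻¹` and `u_xy = u_yx` gives
`u*_ξξ = 1 / u_xx` and `u*_ηη = u_xy² / u_xx - u_yy`, so
`det D²u · u*_ξξ + u*_ηη = 0`.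
-/

open Real

open Filter Topology

lemma fderiv_apply_eq_pdx_pdy (f : ℝ × ℝ → ℝ) (p v : ℝ × ℝ) :
    fderiv ℝ f p v = v.1 * pdx f p + v.2 * pdy f p := by
  have hv : v = v.1 • ((1 : ℝ), (0 : ℝ)) + v.2 • ((0 : ℝ), (1 : ℝ)) := by simp
  conv_lhs => rw [hv, map_add, map_smul, map_smul]
  rfl

section PartialDerivatives

variable {f : ℝ × ℝ → ℝ} {p : ℝ × ℝ} {m n : WithTop ℕ∞}

lemma contDiffAt_pdx (hf : ContDiffAt ℝ n f p) (hmn : m + 1 ≤ n) : ContDiffAt ℝ m (pdx f) p :=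
  (hf.fderiv_right hmn).clm_apply contDiffAt_const

lemma contDiffAt_pdy (hf : ContDiffAt ℝ n f p) (hmn : m + 1 ≤ n) : ContDiffAt ℝ m (pdy f) p :=
  (hf.fderiv_right hmn).clm_apply contDiffAt_const

lemma pdx_pdy_eq_pdy_pdx_of_contDiffAt (hf : ContDiffAt ℝ 2 f p) :
    pdx (pdy f) p = pdy (pdx f) p := by
  have hd : DifferentiableAt ℝ (fderiv ℝ f) p :=
    (hf.fderiv_right (m := 1) (by norm_num)).differentiableAt one_ne_zero
  change fderiv ℝ (fun q ↦ fderiv ℝ f q (0, 1)) p (1, 0)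
    = fderiv ℝ (fun q ↦ fderiv ℝ f q (1, 0)) p (0, 1)
  simpa [fderiv_clm_apply hd (differentiableAt_const _)]
    using hf.isSymmSndFDerivAt (by simp) (1, 0) (0, 1)

end PartialDerivatives

noncomputable def shear (c m : ℝ) (hc : c ≠ 0) : (ℝ × ℝ) ≃L[ℝ] ℝ × ℝ :=
  .equivOfInverse
    ((c • ContinuousLinearMap.fst ℝ ℝ ℝ + m • ContinuousLinearMap.snd ℝ ℝ ℝ).prod
      (ContinuousLinearMap.snd ℝ ℝ ℝ))
    ((c⁻¹ • (ContinuousLinearMap.fst ℝ ℝ ℝ - m • ContinuousLinearMap.snd ℝ ℝ ℝ)).prod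
      (ContinuousLinearMap.snd ℝ ℝ ℝ))
    (fun _ ↦ by ext <;> simp [field])
    (fun _ ↦ by ext <;> simp [field])

@[simp]
lemma shear_apply (c m : ℝ) (hc : c ≠ 0) (v : ℝ × ℝ) :
    shear c m hc v = (c * v.1 + m * v.2, v.2) := rfl

@[simp]
lemma shear_symm_apply (c m : ℝ) (hc : c ≠ 0) (v : ℝ × ℝ) :
    (shear c m hc).symm v = (c⁻¹ * (v.1 - m * v.2), v.2) := rfl

noncomputable def partialLegendreMap (u : ℝ × ℝ → ℝ) (p : ℝ × ℝ) : ℝ × ℝ := (pdx u p, p.2)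

section PartialLegendre

variable {u ustar : ℝ × ℝ → ℝ} {Ω : Set (ℝ × ℝ)} {p : ℝ × ℝ}

lemma contDiffAt_partialLegendreMap (hu : ContDiffAt ℝ 2 u p) :
    ContDiffAt ℝ 1 (partialLegendreMap u) p :=
  (contDiffAt_pdx hu (by norm_num)).prodMk contDiffAt_snd

lemma hasFDerivAt_partialLegendreMap (hu : ContDiffAt ℝ 2 u p) (hc : pdx (pdx u) p ≠ 0) :
    HasFDerivAt (partialLegendreMap u)
      (shear (pdx (pdx u) p) (pdy (pdx u) p) hc : ℝ × ℝ →L[ℝ] ℝ × ℝ) p := by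
  have hpdx := ((contDiffAt_pdx hu (m := 1) (by norm_num)).differentiableAt
    one_ne_zero).hasFDerivAt
  refine (hpdx.prodMk hasFDerivAt_snd).congr_fderiv ?_
  ext <;> simp [fderiv_apply_eq_pdx_pdy (pdx u)]

lemma fderiv_apply_of_rightInverse_partialLegendreMap
    (hstar : ∀ p ∈ Ω, ustar (partialLegendreMap u p) = p.1 * pdx u p - u p)
    {g : ℝ × ℝ → ℝ × ℝ} {q : ℝ × ℝ}
    (hg : ∀ᶠ r in 𝓝 q, g r ∈ Ω ∧ partialLegendreMap u (g r) = r)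
    (hgq : DifferentiableAt ℝ g q) (hu : DifferentiableAt ℝ u (g q)) (v : ℝ × ℝ) :
    fderiv ℝ ustar q v = v.1 * (g q).1 - v.2 * pdy u (g q) := by
  have hustar : ustar =ᶠ[𝓝 q] fun r ↦ (g r).1 * r.1 - u (g r) := by
    filter_upwards [hg] with r ⟨hr, hPr⟩
    have := hstar _ hr
    rwa [hPr, show pdx u (g r) = r.1 from congrArg Prod.fst hPr] at this
  have hsnd : (fun r ↦ (g r).2) =ᶠ[𝓝 q] Prod.snd := by
    filter_upwards [hg] with r ⟨_, hPr⟩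
    exact (congrArg Prod.snd hPr :)
  have hD2 : ∀ w, (fderiv ℝ g q w).2 = w.2 := fun w ↦ by
    simpa [hgq.hasFDerivAt.snd.fderiv, fderiv_snd] using congrArg (· w) (hsnd.fderiv_eq (𝕜 := ℝ))
  have hq1 : pdx u (g q) = q.1 := congrArg Prod.fst hg.self_of_nhds.2
  have hd : HasFDerivAt (fun r ↦ (g r).1 * r.1 - u (g r)) _ q :=
    (hgq.hasFDerivAt.fst.mul hasFDerivAt_fst).sub (hu.hasFDerivAt.comp q hgq.hasFDerivAt)
  rw [hustar.fderiv_eq, hd.fderiv]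
  simp [fderiv_apply_eq_pdx_pdy u, hD2, hq1]
  ring

lemma exists_localInverse_fderiv_partialLegendre (hΩ : IsOpen Ω) (hu : ContDiffOn ℝ 2 u Ω)
    (hstar : ∀ p ∈ Ω, ustar (partialLegendreMap u p) = p.1 * pdx u p - u p)
    (hp : p ∈ Ω) (hc : pdx (pdx u) p ≠ 0) :
    ∃ g : ℝ × ℝ → ℝ × ℝ, g (partialLegendreMap u p) = p ∧
      HasFDerivAt g ((shear (pdx (pdx u) p) (pdy (pdx u) p) hc).symm : ℝ × ℝ →L[ℝ] ℝ × ℝ)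
        (partialLegendreMap u p) ∧
      ∀ᶠ q in 𝓝 (partialLegendreMap u p),
        ∀ v, fderiv ℝ ustar q v = v.1 * (g q).1 - v.2 * pdy u (g q) := by
  have hup := hu.contDiffAt (hΩ.mem_nhds hp)
  have hP := contDiffAt_partialLegendreMap hup
  have hP' := hasFDerivAt_partialLegendreMap hup hc
  have hS := hP.hasStrictFDerivAt' hP' one_ne_zero
  have hgp := hP.localInverse_apply_image hP' one_ne_zero
  have hg := hP.to_localInverse hP' one_ne_zero
  refine ⟨_, hgp, hS.to_localInverse.hasFDerivAt, ?_⟩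
  have hgΩ := hg.continuousAt.preimage_mem_nhds (hgp ▸ hΩ.mem_nhds hp)
  have hgd := (hg.eventually (by simp)).mono fun q hq ↦ hq.differentiableAt one_ne_zero
  filter_upwards [(Filter.eventually_of_mem hgΩ fun q hq ↦ hq).and
    hS.eventually_right_inverse |>.eventually_nhds, hgd] with q hq hgq v
  exact fderiv_apply_of_rightInverse_partialLegendreMap hstar hq hgq
    ((hu.contDiffAt (hΩ.mem_nhds hq.self_of_nhds.1)).differentiableAt two_ne_zero) v

lemma pdx_pdx_partialLegendre (hΩ : IsOpen Ω) (hu : ContDiffOn ℝ 2 u Ω)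
    (hstar : ∀ p ∈ Ω, ustar (partialLegendreMap u p) = p.1 * pdx u p - u p)
    (hp : p ∈ Ω) (hc : pdx (pdx u) p ≠ 0) :
    pdx (pdx ustar) (partialLegendreMap u p) = (pdx (pdx u) p)⁻¹ := by
  obtain ⟨g, -, hg, hfd⟩ := exists_localInverse_fderiv_partialLegendre hΩ hu hstar hp hc
  have hpdx : pdx ustar =ᶠ[𝓝 _] fun q ↦ (g q).1 := hfd.mono fun q hq ↦ by simp [pdx, hq]
  rw [pdx, hpdx.fderiv_eq, hg.fst.fderiv]
  simp

lemma pdy_pdy_partialLegendre (hΩ : IsOpen Ω) (hu : ContDiffOn ℝ 2 u Ω)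
    (hstar : ∀ p ∈ Ω, ustar (partialLegendreMap u p) = p.1 * pdx u p - u p)
    (hp : p ∈ Ω) (hc : pdx (pdx u) p ≠ 0) :
    pdy (pdy ustar) (partialLegendreMap u p)
      = pdy (pdx u) p ^ 2 / pdx (pdx u) p - pdy (pdy u) p := by
  obtain ⟨g, hgp, hg, hfd⟩ := exists_localInverse_fderiv_partialLegendre hΩ hu hstar hp hc
  have hup := hu.contDiffAt (hΩ.mem_nhds hp)
  have hpdy : pdy ustar =ᶠ[𝓝 _] fun q ↦ -pdy u (g q) := hfd.mono fun q hq ↦ by simp [pdy, hq]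
  have hpdy_u : HasFDerivAt (pdy u) (fderiv ℝ (pdy u) p) (g (partialLegendreMap u p)) := by
    rw [hgp]
    exact ((contDiffAt_pdy hup (m := 1) (by norm_num)).differentiableAt one_ne_zero).hasFDerivAt
  have hd : HasFDerivAt (fun q ↦ -pdy u (g q)) _ (partialLegendreMap u p) :=
    (hpdy_u.comp _ hg).neg
  rw [pdy, hpdy.fderiv_eq, hd.fderiv]
  simp [fderiv_apply_eq_pdx_pdy (pdy u), pdx_pdy_eq_pdy_pdx_of_contDiffAt hup]
  field_simp
  ring

end PartialLegendre

theorem partial_legendre_grushin_general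
    (a b α : ℝ)
    (Ω : Set (ℝ × ℝ)) (hΩ : IsOpen Ω)
    (u ustar : ℝ × ℝ → ℝ)
    (hu : ContDiffOn ℝ 2 u Ω)
    (hconv : ∀ p ∈ Ω, ∀ v : ℝ × ℝ, v ≠ 0 →
      0 < fderiv ℝ (fun q => fderiv ℝ u q v) p v)
    (heq : ∀ p ∈ Ω, detD2 u p = (a + b * p.2) ^ α)
    (hstar : ∀ p ∈ Ω, ustar (pdx u p, p.2) = p.1 * pdx u p - u p) :
    ∀ p ∈ Ω,
      (a + b * p.2) ^ α * pdx (pdx ustar) (pdx u p, p.2)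
        + pdy (pdy ustar) (pdx u p, p.2) = 0 := by
  intro p hp
  have hc : 0 < pdx (pdx u) p := hconv p hp (1, 0) (by simp)
  change (a + b * p.2) ^ α * pdx (pdx ustar) (partialLegendreMap u p)
    + pdy (pdy ustar) (partialLegendreMap u p) = 0
  rw [pdx_pdx_partialLegendre hΩ hu hstar hp hc.ne', pdy_pdy_partialLegendre hΩ hu hstar hp hc.ne',
    ← heq p hp, detD2]
  field_simp
  ring

/-- The partial Legendre transform `u*(ξ,η) = x u_x - u`, `(ξ,η) = (u_x(x,y), y)`,
of a `C²` uniformly convex solution of `det D²u = (a + b y)^α` on an open subset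
`Ω` of the upper half plane satisfies the Grushin-type equation
`(a + b η)^α u*_{ξξ} + u*_{ηη} = 0` on `P(Ω)`. -/
theorem partial_legendre_grushin
    (a b α : ℝ) (ha : 0 ≤ a) (hb : 0 < b)
    (Ω : Set (ℝ × ℝ)) (hΩ : IsOpen Ω) (hΩ' : Ω ⊆ {p : ℝ × ℝ | 0 < p.2})
    (u ustar : ℝ × ℝ → ℝ)
    (hu : ContDiffOn ℝ 2 u Ω)
    (hconv : ∀ p ∈ Ω, ∀ v : ℝ × ℝ, v ≠ 0 →
      0 < fderiv ℝ (fun q => fderiv ℝ u q v) p v)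
    (heq : ∀ p ∈ Ω, detD2 u p = (a + b * p.2) ^ α)
    (hstar : ∀ p ∈ Ω, ustar (pdx u p, p.2) = p.1 * pdx u p - u p) :
    ∀ p ∈ Ω,
      (a + b * p.2) ^ α * pdx (pdx ustar) (pdx u p, p.2)
        + pdy (pdy ustar) (pdx u p, p.2) = 0 :=
  partial_legendre_grushin_general a b α Ω hΩ u ustar hu hconv heq hstar
end
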